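/- For each k ∈ {1,2}, the character of the three-dimensional representation ρ_k of UT₃(𝔽₃) satisfies: the trace of ρ_k(g(a,b,c)) equals 3·ω^{(k•b).val} if a = 0 and c = 0, and equals 0 otherwise. -/

import Mathlib

open Matrix

/-- The upper unitriangular matrix g(a,b,c) over ZMod 3. -/
def gmat (a b c : ZMod 3) : Matrix (Fin 3) (Fin 3) (ZMod 3) :=
  !![1, a, b; 0, 1, c; 0, 0, 1]

lemma gmat_mul (a b c a' b' c' : ZMod 3) :
    gmat a b c * gmat a' b' c' = gmat (a + a') (b + b' + a * c') (c + c') := by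
  ext i j
  fin_cases i <;> fin_cases j <;>
    simp [gmat, Matrix.mul_apply, Fin.sum_univ_succ, Matrix.vecHead, Matrix.vecTail] <;> ring

lemma gmat_one : gmat 0 0 0 = 1 := by
  ext i j
  fin_cases i <;> fin_cases j <;> simp [gmat, Matrix.one_apply, Matrix.vecHead, Matrix.vecTail]

lemma gmat_mul_inv (a b c : ZMod 3) :
    gmat a b c * gmat (-a) (a * c - b) (-c) = 1 := by
  rw [gmat_mul, show a + -a = (0 : ZMod 3) by ring,
    show b + (a * c - b) + a * -c = (0 : ZMod 3) by ring,
    show c + -c = (0 : ZMod 3) by ring, gmat_one]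

lemma gmat_inv_mul (a b c : ZMod 3) :
    gmat (-a) (a * c - b) (-c) * gmat a b c = 1 := by
  rw [gmat_mul, show -a + a = (0 : ZMod 3) by ring,
    show a * c - b + b + -a * c = (0 : ZMod 3) by ring,
    show -c + c = (0 : ZMod 3) by ring, gmat_one]

/-- g(a,b,c) as a unit of the matrix ring. -/
def gUnit (a b c : ZMod 3) : (Matrix (Fin 3) (Fin 3) (ZMod 3))ˣ :=
  ⟨gmat a b c, gmat (-a) (a * c - b) (-c), gmat_mul_inv a b c, gmat_inv_mul a b c⟩

/-- The subgroup UT₃(𝔽₃) of upper unitriangular matrices. -/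
def UT3 : Subgroup (Matrix (Fin 3) (Fin 3) (ZMod 3))ˣ where
  carrier := {x | ∃ a b c : ZMod 3, (x : Matrix (Fin 3) (Fin 3) (ZMod 3)) = gmat a b c}
  one_mem' := ⟨0, 0, 0, by simpa using gmat_one.symm⟩
  mul_mem' := by
    rintro x y ⟨a, b, c, hx⟩ ⟨a', b', c', hy⟩
    exact ⟨a + a', b + b' + a * c', c + c', by rw [Units.val_mul, hx, hy, gmat_mul]⟩
  inv_mem' := by
    rintro x ⟨a, b, c, hx⟩
    refine ⟨-a, a * c - b, -c, ?_⟩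
    exact Units.inv_eq_of_mul_eq_one_right (by rw [hx, gmat_mul_inv])

/-- g(a,b,c) as an element of UT₃(𝔽₃). -/
def gU (a b c : ZMod 3) : UT3 := ⟨gUnit a b c, ⟨a, b, c, rfl⟩⟩

noncomputable def ω : ℂ := Complex.exp (2 * Real.pi * Complex.I / 3)

/-- The linear map ρ_k(g(a,b,c)) acting on ZMod 3 → ℂ. -/
noncomputable def rhoMap (k : ℕ) (a b c : ZMod 3) : (ZMod 3 → ℂ) →ₗ[ℂ] (ZMod 3 → ℂ) where
  toFun φ := fun n => ω ^ ((k • (b + n * c)).val) * φ (n + a)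
  map_add' φ ψ := by funext n; simp [mul_add]
  map_smul' r φ := by funext n; simp [smul_eq_mul]; ring

/-
`ρ_k(g(a,b,c))` is a weighted shift `φ ↦ (n ↦ w n · φ (n + a))`: its matrix in the standard basis
has zero diagonal unless `a = 0`, and is then diagonal with entries `w n`. These weights
`ω^{(k•(b + n c)).val} = ψ (k•b + n (k•c))` are values of the primitive additive character
`ψ x = ω^{x.val}` of `ZMod 3`, so by orthogonality their sum is `3 ψ (k•b)` if `k•c = 0` and `0`
otherwise; as `3 ∤ k`, `k•c = 0` exactly when `c = 0`.
-/

theorem LinearMap.trace_pi_eq_sum_apply_single {R ι : Type*} [CommRing R] [Fintype ι]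
    [DecidableEq ι] (f : (ι → R) →ₗ[R] (ι → R)) :
    LinearMap.trace R (ι → R) f = ∑ i, f (Pi.single i 1) i := by
  simp [LinearMap.trace_eq_matrix_trace R (Pi.basisFun R ι), Matrix.trace]

section WeightedShift

variable (R : Type*) {G : Type*} [CommRing R] [AddGroup G]

def weightedShift (w : G → R) (a : G) : (G → R) →ₗ[R] (G → R) where
  toFun φ n := w n * φ (n + a)
  map_add' φ ψ := by funext n; simp [mul_add]
  map_smul' r φ := by funext n; simp [mul_left_comm]

theorem trace_weightedShift [Fintype G] [DecidableEq G] (w : G → R) (a : G) :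
    LinearMap.trace R (G → R) (weightedShift R w a) = if a = 0 then ∑ n, w n else 0 := by
  rw [LinearMap.trace_pi_eq_sum_apply_single]
  split_ifs with ha
  · simp [weightedShift, ha]
  · have hshift (n : G) : n + a ≠ n := fun h => ha (by simpa using h)
    simp [weightedShift, Pi.single_eq_of_ne (hshift _)]

end WeightedShift

theorem AddChar.sum_add_mul {R R' : Type*} [CommRing R] [Fintype R] [DecidableEq R]
    [CommRing R'] [IsDomain R'] {ψ : AddChar R R'} (hψ : ψ.IsPrimitive) (b c : R) :
    ∑ x, ψ (b + x * c) = if c = 0 then ψ b * Fintype.card R else 0 := by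
  simp_rw [AddChar.map_add_eq_mul, ← Finset.mul_sum, AddChar.sum_mulShift c hψ]
  split_ifs <;> simp

theorem isPrimitiveRoot_ω : IsPrimitiveRoot ω 3 :=
  Complex.isPrimitiveRoot_exp 3 (by norm_num)

theorem nsmul_eq_zero_iff_of_eq_one_or_eq_two {k : ℕ} (hk : k = 1 ∨ k = 2) (c : ZMod 3) :
    k • c = 0 ↔ c = 0 := by
  rcases hk with rfl | rfl
  · simp
  · revert c; decide

/-- The character of ρ_k: the trace of ρ_k(g(a,b,c)) is 3ω^{(k•b).val} when a = c = 0 and 0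
otherwise. -/
theorem UT3_three_dim_rep_character (k : ℕ) (hk : k = 1 ∨ k = 2) (a b c : ZMod 3) :
    LinearMap.trace ℂ (ZMod 3 → ℂ) (rhoMap k a b c) =
      if a = 0 ∧ c = 0 then 3 * ω ^ ((k • b).val) else 0 := by
  set ψ := AddChar.zmodChar 3 (isPrimitiveRoot_ω.pow_eq_one)
  have hψ : ψ.IsPrimitive := AddChar.zmodChar_primitive_of_primitive_root 3 isPrimitiveRoot_ω
  have hρ : rhoMap k a b c = weightedShift ℂ (fun n => ψ (k • b + n * k • c)) a := by
    refine LinearMap.ext fun φ => funext fun n => ?_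
    show ω ^ (k • (b + n * c)).val * φ (n + a) = ω ^ (k • b + n * k • c).val * φ (n + a)
    rw [smul_add, mul_smul_comm]
  rw [hρ, trace_weightedShift, AddChar.sum_add_mul hψ]
  simp only [nsmul_eq_zero_iff_of_eq_one_or_eq_two hk, ψ, AddChar.zmodChar_apply, ZMod.card,
    ite_and]
  by_cases ha : a = 0 <;> by_cases hc : c = 0 <;> simp [ha, hc, mul_comm]
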